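/- arXiv:2111.02662 — 3 statements merged into one kernel-verified Lean document; each statement's English description precedes it below -/
import Mathlib

section
/- Let n be a positive integer, let p be a real number with 1 < p ≤ n, and let m be a positive integer with m ≤ (1 - 1/p)·n. Then 1 - (1 - p/n)^m > m/n. (That is, if each of n computations is tested independently with probability p/n, the probability that at least one of m faked computations is detected exceeds m/n.) -/
lemma detection_aux (n : ℕ) (hn : 0 < n) (p : ℝ) (hp1 : 1 < p) (hpn : p ≤ n) :
    ∀ m : ℕ, 0 < m → (m : ℝ) ≤ (1 - 1 / p) * n → (1 - p / n) ^ m < 1 - (m : ℝ) / n := by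
  have hn0 : (0 : ℝ) < n := by exact_mod_cast hn
  have hp0 : (0 : ℝ) < p := by linarith
  have hx0 : (0 : ℝ) ≤ 1 - p / n := by
    have : p / n ≤ 1 := by rw [div_le_one hn0]; exact hpn
    linarith
  intro m
  induction m with
  | zero => intro h; simp at h
  | succ k ih =>
    intro _ hle
    rcases Nat.eq_zero_or_pos k with hk | hk
    · subst hk
      simp only [pow_one, Nat.cast_one, zero_add, Nat.cast_zero]
      have h1 : 1 / (n : ℝ) < p / n := (div_lt_div_iff_of_pos_right hn0).mpr hp1
      linarith
    · have hklen : (k : ℝ) ≤ (1 - 1 / p) * n := by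
        push_cast at hle; linarith
      have ihk := ih hk hklen
      have h1 : (1 - p / n) ^ (k + 1) ≤ (1 - (k : ℝ) / n) * (1 - p / n) := by
        rw [pow_succ]
        exact mul_le_mul_of_nonneg_right (le_of_lt ihk) hx0
      have h2 : (1 - (k : ℝ) / n) * (1 - p / n) < 1 - ((k : ℝ) + 1) / n := by
        push_cast at hle
        have key : p * ((n : ℝ) - k) ≥ p + n := by
          have h1p : (1 - 1/p) * n = n - n / p := by field_simp
          rw [h1p] at hle
          have h3 : (n : ℝ) - k ≥ 1 + n / p := by linarith
          have h4 := mul_le_mul_of_nonneg_left h3 (le_of_lt hp0)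
          calc p * ((n:ℝ) - k) ≥ p * (1 + n / p) := h4
            _ = p + n := by field_simp
        have expand : (1 - (k : ℝ) / n) * (1 - p / n)
            = 1 - ((k : ℝ) + 1) / n - (p * ((n:ℝ) - k) - n) / (n * n) := by
          field_simp; ring
        rw [expand]
        have hpos : (0:ℝ) < (p * ((n:ℝ) - k) - n) / (n * n) := by
          apply div_pos _ (by positivity)
          linarith
        linarith
      push_cast
      calc (1 - p / n) ^ (k + 1) ≤ (1 - (k : ℝ) / n) * (1 - p / n) := h1
        _ < 1 - ((k : ℝ) + 1) / n := h2

theorem detection_prob_gt_ratio (n : ℕ) (hn : 0 < n) (p : ℝ) (hp1 : 1 < p) (hpn : p ≤ n)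
    (m : ℕ) (hm : 0 < m) (hmn : (m : ℝ) ≤ (1 - 1 / p) * n) :
    1 - (1 - p / n) ^ m > (m : ℝ) / n := by
  have := detection_aux n hn p hp1 hpn m hm hmn
  linarith
end

section
/- Let n be a positive integer, p a real number with 1 < p ≤ n, c > 0 a real number, and d a real number with d ≥ c / (1 - e^{-(p-1)}). Then for every positive integer m with m ≤ n, the expected loss of deposit from faking m computations exceeds the saved computation cost: (1 - (1 - p/n)^m)·d > m·c/n. -/
lemma geom_sum_avg {x : ℝ} (hx0 : 0 ≤ x) (hx1 : x ≤ 1) {m n : ℕ} (hmn : m ≤ n) :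
    (m : ℝ) * ∑ i ∈ Finset.range n, x ^ i ≤ (n : ℝ) * ∑ i ∈ Finset.range m, x ^ i := by
  have hsplit : ∑ i ∈ Finset.range n, x ^ i
      = (∑ i ∈ Finset.range m, x ^ i) + ∑ i ∈ Finset.Ico m n, x ^ i := by
    rw [← Finset.sum_range_add_sum_Ico _ hmn]
  have hT : ∑ i ∈ Finset.Ico m n, x ^ i ≤ (n - m : ℕ) * x ^ m := by
    calc ∑ i ∈ Finset.Ico m n, x ^ i ≤ ∑ _i ∈ Finset.Ico m n, x ^ m := by
          apply Finset.sum_le_sum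
          intro i hi
          exact pow_le_pow_of_le_one hx0 hx1 (Finset.mem_Ico.mp hi).1
      _ = (n - m : ℕ) * x ^ m := by
          rw [Finset.sum_const, Nat.card_Ico, nsmul_eq_mul]
  have hS : (m : ℝ) * x ^ m ≤ ∑ i ∈ Finset.range m, x ^ i := by
    calc (m : ℝ) * x ^ m = ∑ _i ∈ Finset.range m, x ^ m := by
          rw [Finset.sum_const, Finset.card_range, nsmul_eq_mul]
      _ ≤ ∑ i ∈ Finset.range m, x ^ i := by
          apply Finset.sum_le_sum
          intro i hi
          exact pow_le_pow_of_le_one hx0 hx1 (le_of_lt (Finset.mem_range.mp hi))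
  have hcast : ((n - m : ℕ) : ℝ) = (n : ℝ) - m := Nat.cast_sub hmn
  rw [hcast] at hT
  rw [hsplit]
  have hm : (0 : ℝ) ≤ m := Nat.cast_nonneg m
  have hnm : (m : ℝ) ≤ n := by exact_mod_cast hmn
  nlinarith [mul_le_mul_of_nonneg_left hT hm,
    mul_le_mul_of_nonneg_left hS (by linarith : (0:ℝ) ≤ (n:ℝ) - m)]

lemma key_ineq {x : ℝ} (hx0 : 0 ≤ x) (hx1 : x ≤ 1) {m n : ℕ} (hmn : m ≤ n) :
    (m : ℝ) * (1 - x ^ n) ≤ (n : ℝ) * (1 - x ^ m) := by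
  have h1 : (1 : ℝ) - x ^ m = (1 - x) * ∑ i ∈ Finset.range m, x ^ i := by
    have := geom_sum_mul x m
    nlinarith [this]
  have h2 : (1 : ℝ) - x ^ n = (1 - x) * ∑ i ∈ Finset.range n, x ^ i := by
    have := geom_sum_mul x n
    nlinarith [this]
  rw [h1, h2]
  have h3 := geom_sum_avg hx0 hx1 hmn
  nlinarith [h3, sub_nonneg.mpr hx1]

theorem expected_loss_gt_saved_cost (n : ℕ) (hn : 0 < n) (p : ℝ) (hp1 : 1 < p) (hpn : p ≤ n)
    (c : ℝ) (hc : 0 < c) (d : ℝ) (hd : d ≥ c / (1 - Real.exp (-(p - 1)))) :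
    ∀ m : ℕ, 0 < m → m ≤ n →
      (1 - (1 - p / n) ^ m) * d > (m : ℝ) * c / n := by
  intro m hm hmn
  have hn' : (0 : ℝ) < n := by exact_mod_cast hn
  set x : ℝ := 1 - p / n with hxdef
  have hx0 : 0 ≤ x := by
    have : p / n ≤ 1 := by rw [div_le_one hn']; exact hpn
    simp only [hxdef]; linarith
  have hx1 : x < 1 := by
    have : 0 < p / n := div_pos (by linarith) hn'
    simp only [hxdef]; linarith
  -- x^n ≤ e^{-p}
  have hexp : x ^ n ≤ Real.exp (-p) := by
    have h1 : x ≤ Real.exp (-(p / n)) := by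
      have := Real.add_one_le_exp (-(p / n))
      simp only [hxdef]; linarith
    calc x ^ n ≤ Real.exp (-(p / n)) ^ n := pow_le_pow_left₀ hx0 h1 n
      _ = Real.exp (-p) := by
          rw [← Real.exp_nat_mul]; congr 1; field_simp
  set E : ℝ := Real.exp (-(p - 1)) with hEdef
  have hE1 : E < 1 := by
    rw [hEdef, Real.exp_lt_one_iff]; linarith
  have hEpos : 0 < E := Real.exp_pos _
  have hlt : Real.exp (-p) < E := by
    rw [hEdef]; apply Real.exp_lt_exp.mpr; linarith
  have hkey : (m : ℝ) * (1 - x ^ n) ≤ (n : ℝ) * (1 - x ^ m) := key_ineq hx0 (le_of_lt hx1) hmn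
  have hm' : (0 : ℝ) < m := by exact_mod_cast hm
  -- n*(1-x^m) > m*(1-E)
  have hstep : (m : ℝ) * (1 - E) < (n : ℝ) * (1 - x ^ m) := by
    have : (1 : ℝ) - E < 1 - x ^ n := by nlinarith
    nlinarith
  have hEc : 0 < 1 - E := by linarith
  have hcd : c ≤ d * (1 - E) := by
    rw [ge_iff_le, div_le_iff₀ hEc] at hd
    exact hd
  have hdpos : 0 < d := by
    have : 0 < c / (1 - E) := div_pos hc hEc
    linarith [hd]
  have hxm : (0 : ℝ) < 1 - x ^ m :=
    sub_pos.mpr (pow_lt_one₀ hx0 hx1 hm.ne')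
  rw [gt_iff_lt, div_lt_iff₀ hn']
  calc (m : ℝ) * c ≤ (m : ℝ) * (d * (1 - E)) := by
        apply mul_le_mul_of_nonneg_left hcd (le_of_lt hm')
    _ = ((m : ℝ) * (1 - E)) * d := by ring
    _ < ((n : ℝ) * (1 - x ^ m)) * d := by
        exact mul_lt_mul_of_pos_right hstep hdpos
    _ = (1 - x ^ m) * d * n := by ring
end

section
/- Let n be a positive integer, p a real number with 1 < p ≤ n, c > 0 and B ≥ 0 real numbers, and d a real number with d ≥ c / (1 - e^{-(p-1)}). For a worker who fakes m of the n computations, define the expected utility E(m) = (1 - p/n)^m · (B - (c - m·c/n)) + (1 - (1 - p/n)^m) · (-d - (c - m·c/n)). Then for every positive integer m with m ≤ n, E(m) < E(0) = B - c; that is, an economically-greedy worker maximizes its expected utility by honestly executing all n computations. -/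
theorem honest_execution_maximizes_utility (n : ℕ) (hn : 0 < n) (p : ℝ) (hp1 : 1 < p)
    (hpn : p ≤ n) (c : ℝ) (hc : 0 < c) (B : ℝ) (hB : 0 ≤ B) (d : ℝ)
    (hd : d ≥ c / (1 - Real.exp (-(p - 1))))
    (E : ℕ → ℝ)
    (hE : ∀ m : ℕ, E m = (1 - p / n) ^ m * (B - (c - (m : ℝ) * c / n))
      + (1 - (1 - p / n) ^ m) * (-d - (c - (m : ℝ) * c / n))) :
    ∀ m : ℕ, 0 < m → m ≤ n → E m < E 0 ∧ E 0 = B - c := by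
  have hn' : (0:ℝ) < n := by exact_mod_cast hn
  have hE0 : E 0 = B - c := by rw [hE 0]; simp
  intro m hm hmn
  refine ⟨?_, hE0⟩
  set t : ℝ := (m : ℝ) / n with ht
  have ht0 : 0 < t := by positivity
  have ht1 : t ≤ 1 := by
    rw [ht, div_le_one hn']
    exact_mod_cast hmn
  set x : ℝ := (1 - p / n) ^ m with hx
  have hq0 : (0:ℝ) ≤ 1 - p / n := by
    rw [sub_nonneg, div_le_one hn']; exact hpn
  have hx0 : 0 ≤ x := pow_nonneg hq0 m
  set ep : ℝ := Real.exp (-p) with hep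
  set ep' : ℝ := Real.exp (-(p - 1)) with hep'
  have hepep' : ep < ep' := Real.exp_lt_exp.2 (by linarith)
  have hep'1 : ep' < 1 := by
    rw [hep', Real.exp_lt_one_iff]; linarith
  have hep'0 : 0 < ep' := Real.exp_pos _
  have hD : 0 < 1 - ep' := by linarith
  have hdpos : 0 < d := lt_of_lt_of_le (by positivity) hd
  -- step 1 : x ≤ exp (m * (-(p/n)))
  have h1 : x ≤ Real.exp ((m : ℝ) * (-(p / n))) := by
    rw [Real.exp_nat_mul]
    apply pow_le_pow_left₀ hq0
    have := Real.add_one_le_exp (-(p / n))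
    linarith
  -- step 2 : convexity of exp
  have h2 : Real.exp ((m:ℝ) * (-(p / n))) ≤ (1 - t) + t * ep := by
    have hconv := convexOn_exp.2 (Set.mem_univ (0:ℝ)) (Set.mem_univ (-p))
      (by linarith : (0:ℝ) ≤ 1 - t) (le_of_lt ht0) (by ring)
    simp only [smul_eq_mul, mul_zero, zero_add, mul_neg, Real.exp_zero, mul_one] at hconv
    have harg : (m:ℝ) * (-(p / n)) = -(t * p) := by
      rw [ht]; field_simp
    rw [harg]
    convert hconv using 2
  have hx_le : x ≤ 1 - t + t * ep := le_trans h1 h2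
  -- key inequality
  have hA : t * (1 - ep') < 1 - x := by
    have : t * (1 - ep') < t * (1 - ep) := by
      apply mul_lt_mul_of_pos_left _ ht0
      linarith
    linarith
  have hcd : c ≤ (1 - ep') * d := by
    have := (div_le_iff₀ hD).mp hd
    linarith
  have hBd : 0 < B + d := by linarith
  have key : t * c < (1 - x) * (B + d) := by
    have h3 : t * c ≤ t * ((1 - ep') * (B + d)) := by
      apply mul_le_mul_of_nonneg_left _ (le_of_lt ht0)
      nlinarith
    have h4 : t * ((1 - ep') * (B + d)) < (1 - x) * (B + d) := by
      rw [← mul_assoc]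
      exact mul_lt_mul_of_pos_right hA hBd
    linarith
  have htc : t * c = (m:ℝ) * c / n := by rw [ht]; ring
  rw [hE m, hE0]
  nlinarith [key, htc]
end
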